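/- Let m ≥ 1 and let t be an admissible word of length 2m. Then both half-doubles d₁(t) and d₂(t) are admissible words of length 2m. -/

import Mathlib

/-- A word of length `2*m`: a cyclic sequence of letter indices. -/
abbrev Word (m : ℕ) := ZMod (2*m) → ZMod (2*m)

/-- Rotation of a word by `r`. -/
def rot (m : ℕ) (t : Word m) (r : ZMod (2*m)) : Word m := fun k => t (k + r)

/-- `ε` is a decoration of the word `t`. -/
def IsDecoration (m : ℕ) (t : Word m) (ε : ZMod (2*m) → ℤ) : Prop :=
  (∀ k, ε k = 1 ∨ ε k = -1) ∧
  (∀ k, ε k = 1 → ε (k+1) = 1 → t (k+1) = t k + 1) ∧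
  (∀ k, ε k = -1 → ε (k+1) = -1 → t (k+1) = t k - 1) ∧
  (∀ k, ε k ≠ ε (k+1) → t (k+1) = t k)

/-- A word is admissible if it admits a decoration. -/
def Admissible (m : ℕ) (t : Word m) : Prop := ∃ ε, IsDecoration m t ε

/-- First half-double: `d₁(t)(k) = t(k)` for `0 ≤ k ≤ m-1`, and
`d₁(t)(k) = t(2m-1-k)` for `m ≤ k ≤ 2m-1`. -/
def d1 (m : ℕ) (t : Word m) : Word m := fun k =>
  if k.val < m then t k else t ((2*m - 1 - k.val : ℕ) : ZMod (2*m))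

/-- Second half-double: `d₂(t) = d₁(rotation of t by m)`. -/
def d2 (m : ℕ) (t : Word m) : Word m := d1 m (rot m t (m : ZMod (2*m)))

/-!
A decoration is a cyclic chain of "steps" between consecutive pairs `(ε k, t k)`. The step
relation is invariant under reading it backwards while negating both signs, and negating the
sign while keeping the letter is always a step. Hence `ε` on the first half followed by the
reversed, negated `ε` on the second half decorates `d₁(t)`: the two seams are sign flips.
For `d₂`, rotate the decoration first.
-/

section HalfFold

variable {α : Type*} {m : ℕ}

/-- `d1 m t` is `halfFold m id t`. -/
def halfFold (m : ℕ) (σ : α → α) (f : ZMod (2 * m) → α) : ZMod (2 * m) → α := fun k =>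
  if k.val < m then f k else σ (f ((2 * m - 1 - k.val : ℕ) : ZMod (2 * m)))

lemma halfFold_natCast (σ : α → α) (f : ZMod (2 * m) → α) {n : ℕ} (hn : n < 2 * m) :
    halfFold m σ f n = if n < m then f n else σ (f ((2 * m - 1 - n : ℕ) : ZMod (2 * m))) := by
  simp only [halfFold, ZMod.val_natCast_of_lt hn]

lemma halfFold_prodMap {β : Type*} (σ : α → α) (τ : β → β) (f : ZMod (2 * m) → α)
    (g : ZMod (2 * m) → β) :
    halfFold m (Prod.map σ τ) (fun k => (f k, g k)) =
      fun k => (halfFold m σ f k, halfFold m τ g k) := by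
  funext k
  unfold halfFold
  split_ifs <;> rfl

theorem halfFold_chain {R : α → α → Prop} {σ : α → α} (hm : 0 < m)
    (hσ : Function.Involutive σ) (hrev : ∀ a b, R a b → R (σ b) (σ a)) (hturn : ∀ a, R a (σ a))
    {f : ZMod (2 * m) → α} (hf : ∀ k, R (f k) (f (k + 1))) (k : ZMod (2 * m)) :
    R (halfFold m σ f k) (halfFold m σ f (k + 1)) := by
  have : NeZero (2 * m) := ⟨by omega⟩
  obtain ⟨n, hn, rfl⟩ : ∃ n < 2 * m, (n : ZMod (2 * m)) = k :=
    ⟨k.val, k.val_lt, ZMod.natCast_zmod_val k⟩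
  rw [← Nat.cast_succ]
  rcases (Nat.succ_le_of_lt hn).lt_or_eq with hn' | hwrap
  · rw [halfFold_natCast σ f hn, halfFold_natCast σ f hn']
    split_ifs with h h'
    · rw [Nat.cast_succ]
      exact hf n
    · rw [show 2 * m - 1 - n.succ = n by omega]
      exact hturn _
    · omega
    · rw [show 2 * m - 1 - n = 2 * m - 1 - (n + 1) + 1 by omega, Nat.cast_succ]
      exact hrev _ _ (hf _)
  · have hzero : halfFold m σ f 0 = f 0 := by
      simp only [halfFold, ZMod.val_zero, if_pos hm]
    rw [hwrap, ZMod.natCast_self, hzero, halfFold_natCast σ f hn, if_neg (by omega),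
      show 2 * m - 1 - n = 0 by omega, Nat.cast_zero]
    simpa only [hσ (f 0)] using hturn (σ (f 0))

end HalfFold

section Decoration

variable {m : ℕ}

def DecorationStep {n : ℕ} (a b : ℤ × ZMod n) : Prop :=
  (a.1 = 1 → b.1 = 1 → b.2 = a.2 + 1) ∧ (a.1 = -1 → b.1 = -1 → b.2 = a.2 - 1) ∧
    (a.1 ≠ b.1 → b.2 = a.2)

def signFlip {n : ℕ} : ℤ × ZMod n → ℤ × ZMod n := Prod.map Neg.neg id

lemma signFlip_involutive {n : ℕ} : Function.Involutive (signFlip (n := n)) :=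
  neg_involutive.prodMap fun _ => rfl

lemma DecorationStep.signFlip_symm {n : ℕ} {a b : ℤ × ZMod n} (h : DecorationStep a b) :
    DecorationStep (signFlip b) (signFlip a) := by
  obtain ⟨hup, hdown, hturn⟩ := h
  refine ⟨fun hb ha => ?_, fun hb ha => ?_,
    fun hne => (hturn fun he => hne (by simp [signFlip, he])).symm⟩
  all_goals simp only [signFlip, Prod.map_fst, Prod.map_snd, id, neg_eq_iff_eq_neg] at ha hb ⊢
  · rw [hdown ha hb]; ring
  · rw [hup ha hb]; ring

lemma decorationStep_signFlip {n : ℕ} (a : ℤ × ZMod n) : DecorationStep a (signFlip a) := by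
  refine ⟨fun h h' => ?_, fun h h' => ?_, fun _ => rfl⟩ <;>
    simp only [signFlip, Prod.map_fst] at h' <;> omega

lemma isDecoration_iff (t : Word m) (ε : ZMod (2 * m) → ℤ) :
    IsDecoration m t ε ↔
      (∀ k, ε k = 1 ∨ ε k = -1) ∧ ∀ k, DecorationStep (ε k, t k) (ε (k + 1), t (k + 1)) := by
  simp only [IsDecoration, DecorationStep, forall_and]

lemma IsDecoration.rot {t : Word m} {ε : ZMod (2 * m) → ℤ} (h : IsDecoration m t ε)
    (r : ZMod (2 * m)) : IsDecoration m (rot m t r) (fun k => ε (k + r)) := by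
  rw [isDecoration_iff] at h ⊢
  exact ⟨fun k => h.1 (k + r),
    fun k => by simpa only [_root_.rot, add_right_comm k 1 r] using h.2 (k + r)⟩

lemma IsDecoration.d1 (hm : 0 < m) {t : Word m} {ε : ZMod (2 * m) → ℤ}
    (h : IsDecoration m t ε) : IsDecoration m (d1 m t) (halfFold m Neg.neg ε) := by
  rw [isDecoration_iff] at h ⊢
  refine ⟨fun k => ?_, fun k => ?_⟩
  · unfold halfFold
    split_ifs
    · exact h.1 k
    · rcases h.1 ((2 * m - 1 - k.val : ℕ) : ZMod (2 * m)) with h' | h' <;> simp [h']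
  · have := halfFold_chain hm signFlip_involutive (fun _ _ => DecorationStep.signFlip_symm)
      decorationStep_signFlip h.2 k
    simp only [signFlip, halfFold_prodMap] at this
    exact this

end Decoration

/-- Both half-doubles of an admissible word are admissible. -/
theorem half_doubles_admissible (m : ℕ) (hm : 1 ≤ m) (t : Word m)
    (ht : Admissible m t) :
    Admissible m (d1 m t) ∧ Admissible m (d2 m t) := by
  obtain ⟨ε, hε⟩ := ht
  exact ⟨⟨_, hε.d1 hm⟩, ⟨_, (hε.rot _).d1 hm⟩⟩
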